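/- arXiv:1903.00938 — 6 statements merged into one kernel-verified Lean document; each statement's English description precedes it below -/
import Mathlib

section
/- Let $K = [0,\xi] \times [0,\eta]$ with $\xi, \eta > 0$, and let $g_{ij}$ ($i = 1,\dots,4$, $j = 1,2$) be the second-order Gauss--Legendre points on the four edges of $K$: with $\theta_1 = \tfrac12(1 - 1/\sqrt3)$ and $\theta_2 = \tfrac12(1 + 1/\sqrt3)$, set $g_{11} = (\theta_1\xi, 0)$, $g_{12} = (\theta_2\xi, 0)$, $g_{21} = (\xi, \theta_1\eta)$, $g_{22} = (\xi, \theta_2\eta)$, $g_{31} = (\theta_2\xi, \eta)$, $g_{32} = (\theta_1\xi, \eta)$, $g_{41} = (0, \theta_2\eta)$, $g_{42} = (0, \theta_1\eta)$. Then every polynomial $p$ of total degree at most $2$ in two variables satisfies $p(g_{11}) - p(g_{12}) + p(g_{21}) - p(g_{22}) + p(g_{31}) - p(g_{32}) + p(g_{41}) - p(g_{42}) = 0$. -/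
/-!
Every monomial `x ^ i * y ^ j` of total degree at most two is a function of `x` alone, of `y`
alone, or `x * y`. On the eight points, the first two kinds cancel between the two horizontal
edges (resp. the two vertical edges), whose points are traversed in opposite orders, and `x * y`
contributes `(θ₂ - θ₁) ξ η` from the horizontal edges and its negative from the vertical ones.
-/

open MvPolynomial

section EdgeDefect

variable {R : Type*} [CommRing R]

def edgeDefect (f : R → R → R) (ξ η θ₁ θ₂ : R) : R :=
  f (θ₁ * ξ) 0 - f (θ₂ * ξ) 0 + f ξ (θ₁ * η) - f ξ (θ₂ * η)
    + f (θ₂ * ξ) η - f (θ₁ * ξ) η + f 0 (θ₂ * η) - f 0 (θ₁ * η)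

variable (ξ η θ₁ θ₂ : R)

theorem edgeDefect_sum {ι : Type*} (s : Finset ι) (f : ι → R → R → R) :
    edgeDefect (fun x y => ∑ i ∈ s, f i x y) ξ η θ₁ θ₂ =
      ∑ i ∈ s, edgeDefect (f i) ξ η θ₁ θ₂ := by
  simp only [edgeDefect, Finset.sum_add_distrib, Finset.sum_sub_distrib]

theorem edgeDefect_const_mul (c : R) (f : R → R → R) :
    edgeDefect (fun x y => c * f x y) ξ η θ₁ θ₂ = c * edgeDefect f ξ η θ₁ θ₂ := by
  simp only [edgeDefect]
  ring

theorem edgeDefect_eq_zero_of_eq_add_add_mul (f : R → R → R) (u v : R → R) (c : R)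
    (hf : ∀ x y, f x y = u x + v y + c * x * y) : edgeDefect f ξ η θ₁ θ₂ = 0 := by
  simp only [edgeDefect, hf]
  ring

theorem edgeDefect_pow_mul_pow {i j : ℕ} (hij : i + j ≤ 2) :
    edgeDefect (fun x y => x ^ i * y ^ j) ξ η θ₁ θ₂ = 0 := by
  rcases (by omega : i = 0 ∨ j = 0 ∨ (i = 1 ∧ j = 1)) with rfl | rfl | ⟨rfl, rfl⟩
  · exact edgeDefect_eq_zero_of_eq_add_add_mul _ _ _ _ _ (fun _ => 0) (fun y => y ^ j) 0
      fun x y => by ring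
  · exact edgeDefect_eq_zero_of_eq_add_add_mul _ _ _ _ _ (fun x => x ^ i) (fun _ => 0) 0
      fun x y => by ring
  · exact edgeDefect_eq_zero_of_eq_add_add_mul _ _ _ _ _ (fun _ => 0) (fun _ => 0) 1
      fun x y => by ring

end EdgeDefect

theorem MvPolynomial.eval_vecCons_eq_sum {R : Type*} [CommRing R] (p : MvPolynomial (Fin 2) R)
    (x y : R) : eval ![x, y] p = ∑ d ∈ p.support, coeff d p * (x ^ d 0 * y ^ d 1) := by
  rw [eval_eq']
  refine Finset.sum_congr rfl fun d _ => ?_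
  simp [Fin.prod_univ_two]

theorem MvPolynomial.add_le_totalDegree_of_mem_support {R : Type*} [CommSemiring R]
    {p : MvPolynomial (Fin 2) R} {d : Fin 2 →₀ ℕ} (hd : d ∈ p.support) :
    d 0 + d 1 ≤ p.totalDegree := by
  simpa [Finsupp.sum_fintype, Fin.sum_univ_two] using le_totalDegree hd

theorem MvPolynomial.edgeDefect_eval_eq_zero {R : Type*} [CommRing R]
    (p : MvPolynomial (Fin 2) R) (hp : p.totalDegree ≤ 2) (ξ η θ₁ θ₂ : R) :
    edgeDefect (fun x y => eval ![x, y] p) ξ η θ₁ θ₂ = 0 := by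
  simp only [eval_vecCons_eq_sum, edgeDefect_sum, edgeDefect_const_mul]
  refine Finset.sum_eq_zero fun d hd => ?_
  rw [edgeDefect_pow_mul_pow _ _ _ _ ((add_le_totalDegree_of_mem_support hd).trans hp),
    mul_zero]

theorem stmt4_general (ξ η : ℝ)
    (θ₁ θ₂ : ℝ)
    (p : MvPolynomial (Fin 2) ℝ) (hp : p.totalDegree ≤ 2) :
    eval ![θ₁ * ξ, 0] p - eval ![θ₂ * ξ, 0] p
      + eval ![ξ, θ₁ * η] p - eval ![ξ, θ₂ * η] p
      + eval ![θ₂ * ξ, η] p - eval ![θ₁ * ξ, η] p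
      + eval ![(0 : ℝ), θ₂ * η] p - eval ![(0 : ℝ), θ₁ * η] p = 0 :=
  p.edgeDefect_eval_eq_zero hp ξ η θ₁ θ₂

/-- First compatibility condition at the eight edge Gauss points (Lemma A.1, (A.2)). -/
theorem stmt4 (ξ η : ℝ) (hξ : 0 < ξ) (hη : 0 < η)
    (θ₁ θ₂ : ℝ) (hθ₁ : θ₁ = (1 - 1 / Real.sqrt 3) / 2) (hθ₂ : θ₂ = (1 + 1 / Real.sqrt 3) / 2)
    (p : MvPolynomial (Fin 2) ℝ) (hp : p.totalDegree ≤ 2) :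
    eval ![θ₁ * ξ, 0] p - eval ![θ₂ * ξ, 0] p
      + eval ![ξ, θ₁ * η] p - eval ![ξ, θ₂ * η] p
      + eval ![θ₂ * ξ, η] p - eval ![θ₁ * ξ, η] p
      + eval ![(0 : ℝ), θ₂ * η] p - eval ![(0 : ℝ), θ₁ * η] p = 0 :=
  stmt4_general ξ η θ₁ θ₂ p hp
end

section
/- With the rectangle $K = [0,\xi]\times[0,\eta]$ and Gauss points $g_{ij}$ as above, every $p \in P_2(K)$ satisfies $\theta_1(p(g_{11}) - p(g_{32})) + \theta_2(p(g_{31}) - p(g_{12})) + (p(g_{21}) - p(g_{22})) = 0$, where $\theta_1 = \tfrac12(1-1/\sqrt3)$ and $\theta_2 = \tfrac12(1+1/\sqrt3)$. -/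
/-!
The left-hand side is linear in `p`, so it suffices to check the monomials `x^a y^b` with
`a + b ≤ 2`. For each of these it is a polynomial identity in `θ₁, θ₂, ξ, η` that holds as soon
as `θ₁ + θ₂ = 1`.
-/

open MvPolynomial

theorem LinearMap.map_eq_zero_of_totalDegree_le {σ R M : Type*} [CommSemiring R]
    [AddCommMonoid M] [Module R M] (L : MvPolynomial σ R →ₗ[R] M) {n : ℕ}
    (hL : ∀ d : σ →₀ ℕ, (d.sum fun _ e => e) ≤ n → L (monomial d 1) = 0)
    {p : MvPolynomial σ R} (hp : p.totalDegree ≤ n) : L p = 0 := by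
  rw [p.as_sum, map_sum]
  refine Finset.sum_eq_zero fun d hd => ?_
  rw [← mul_one (coeff d p), ← smul_eq_mul, ← smul_monomial, map_smul,
    hL d ((le_totalDegree hd).trans hp), smul_zero]

theorem eval_monomial_one_fin_two {R : Type*} [CommSemiring R] (v : Fin 2 → R) (d : Fin 2 →₀ ℕ) :
    eval v (monomial d 1) = v 0 ^ d 0 * v 1 ^ d 1 := by
  rw [eval_monomial, one_mul, Finsupp.prod_fintype _ _ (fun _ => pow_zero _), Fin.prod_univ_two]

theorem gauss_edge_identity_monomial {ξ η θ₁ θ₂ : ℝ} (hθ : θ₁ + θ₂ = 1) {a b : ℕ}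
    (hab : a + b ≤ 2) :
    θ₁ * ((θ₁ * ξ) ^ a * 0 ^ b - (θ₁ * ξ) ^ a * η ^ b)
      + θ₂ * ((θ₂ * ξ) ^ a * η ^ b - (θ₂ * ξ) ^ a * 0 ^ b)
      + (ξ ^ a * (θ₁ * η) ^ b - ξ ^ a * (θ₂ * η) ^ b) = 0 := by
  obtain rfl : θ₂ = 1 - θ₁ := by linarith
  have ha : a ≤ 2 := by omega
  have hb : b ≤ 2 := by omega
  interval_cases a <;> interval_cases b <;> first | omega | ring

/-- The left-hand side at the Gauss points `g₁₁, g₃₂, g₃₁, g₁₂, g₂₁, g₂₂`, as a linear functional. -/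
noncomputable def gaussEdgeDefect (ξ η θ₁ θ₂ : ℝ) : MvPolynomial (Fin 2) ℝ →ₗ[ℝ] ℝ :=
  θ₁ • ((aeval ![θ₁ * ξ, 0]).toLinearMap - (aeval ![θ₁ * ξ, η]).toLinearMap)
    + θ₂ • ((aeval ![θ₂ * ξ, η]).toLinearMap - (aeval ![θ₂ * ξ, 0]).toLinearMap)
    + ((aeval ![ξ, θ₁ * η]).toLinearMap - (aeval ![ξ, θ₂ * η]).toLinearMap)

theorem gaussEdgeDefect_apply (ξ η θ₁ θ₂ : ℝ) (p : MvPolynomial (Fin 2) ℝ) :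
    gaussEdgeDefect ξ η θ₁ θ₂ p =
      θ₁ * (eval ![θ₁ * ξ, 0] p - eval ![θ₁ * ξ, η] p)
      + θ₂ * (eval ![θ₂ * ξ, η] p - eval ![θ₂ * ξ, 0] p)
      + (eval ![ξ, θ₁ * η] p - eval ![ξ, θ₂ * η] p) := by
  simp [gaussEdgeDefect]

theorem gaussEdgeDefect_eq_zero {ξ η θ₁ θ₂ : ℝ} (hθ : θ₁ + θ₂ = 1)
    {p : MvPolynomial (Fin 2) ℝ} (hp : p.totalDegree ≤ 2) :
    gaussEdgeDefect ξ η θ₁ θ₂ p = 0 := by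
  refine (gaussEdgeDefect ξ η θ₁ θ₂).map_eq_zero_of_totalDegree_le (fun d hd => ?_) hp
  rw [Finsupp.sum_fintype _ _ (fun _ => rfl), Fin.sum_univ_two] at hd
  simp only [gaussEdgeDefect_apply, eval_monomial_one_fin_two, Matrix.cons_val_zero,
    Matrix.cons_val_one]
  exact gauss_edge_identity_monomial hθ hd

theorem stmt5_general (ξ η : ℝ)
    (θ₁ θ₂ : ℝ) (hθ₁ : θ₁ = (1 - 1 / Real.sqrt 3) / 2) (hθ₂ : θ₂ = (1 + 1 / Real.sqrt 3) / 2)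
    (p : MvPolynomial (Fin 2) ℝ) (hp : p.totalDegree ≤ 2) :
    θ₁ * (eval ![θ₁ * ξ, 0] p - eval ![θ₁ * ξ, η] p)
      + θ₂ * (eval ![θ₂ * ξ, η] p - eval ![θ₂ * ξ, 0] p)
      + (eval ![ξ, θ₁ * η] p - eval ![ξ, θ₂ * η] p) = 0 := by
  rw [← gaussEdgeDefect_apply]
  exact gaussEdgeDefect_eq_zero (by rw [hθ₁, hθ₂]; ring) hp

/-- Second compatibility condition at the edge Gauss points (Lemma A.1, (A.3)). -/
theorem stmt5 (ξ η : ℝ) (hξ : 0 < ξ) (hη : 0 < η)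
    (θ₁ θ₂ : ℝ) (hθ₁ : θ₁ = (1 - 1 / Real.sqrt 3) / 2) (hθ₂ : θ₂ = (1 + 1 / Real.sqrt 3) / 2)
    (p : MvPolynomial (Fin 2) ℝ) (hp : p.totalDegree ≤ 2) :
    θ₁ * (eval ![θ₁ * ξ, 0] p - eval ![θ₁ * ξ, η] p)
      + θ₂ * (eval ![θ₂ * ξ, η] p - eval ![θ₂ * ξ, 0] p)
      + (eval ![ξ, θ₁ * η] p - eval ![ξ, θ₂ * η] p) = 0 :=
  stmt5_general ξ η θ₁ θ₂ hθ₁ hθ₂ p hp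
end

section
/- Let $K = [0,L] \times [0,H]$ with $L, H > 0$, with vertices $a_1 = (0,0)$, $a_2 = (L,0)$, $a_3 = (L,H)$, $a_4 = (0,H)$. Given real numbers $\alpha_1, \dots, \alpha_4$ and $\beta_1, \dots, \beta_4$, there exists a unique polynomial $p$ of total degree at most $2$ in $x, y$ satisfying $p(a_i) = \alpha_i$ for $i = 1,\dots,4$, together with $\fint_{\{0\}\times[0,H]} \partial_x p = \beta_1$, $\fint_{[0,L]\times\{0\}} \partial_y p = \beta_2$, $\fint_{\{L\}\times[0,H]} \partial_x p = \beta_3$, $\fint_{[0,L]\times\{H\}} \partial_y p = \beta_4$, if and only if the compatibility conditions $\frac{\alpha_3 - \alpha_4}{L} + \frac{\alpha_2 - \alpha_1}{L} = \beta_1 + \beta_3$ and $\frac{\alpha_3 - \alpha_2}{H} + \frac{\alpha_4 - \alpha_1}{H} = \beta_2 + \beta_4$ hold. -/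
/-!
In coefficients `p = c₀ + c₁ x + c₂ y + c₃ x² + c₄ x y + c₅ y²` the eight degrees of freedom are
linear equations; since `∂ₓ p` is affine in `y`, its average over a vertical edge is its value at
the edge midpoint, `c₁ + 2 c₃ x + c₄ H / 2`, and likewise for `∂ᵧ p`. Six of the equations
determine the coefficients uniquely. The remaining two are the compatibility conditions: as
`∂ₓ p` is affine, its averages over the two horizontal edges (which are the vertex differences
divided by `L`) and over the two vertical edges (the `β`s) both sum to twice its value at the
centre of the rectangle, and similarly for `∂ᵧ p`.
-/

/-- A function `ℝ → ℝ → ℝ` is a bivariate polynomial of total degree at most 2. -/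
def IsP2 (p : ℝ → ℝ → ℝ) : Prop :=
  ∃ c₀ c₁ c₂ c₃ c₄ c₅ : ℝ, ∀ x y : ℝ,
    p x y = c₀ + c₁ * x + c₂ * y + c₃ * x ^ 2 + c₄ * x * y + c₅ * y ^ 2

lemma intervalAverage_affine (a b T : ℝ) (hT : T ≠ 0) :
    (1 / T) * ∫ t in (0:ℝ)..T, (a + b * t) = a + b * T / 2 := by
  rw [intervalIntegral.integral_add intervalIntegrable_const
    (intervalIntegral.intervalIntegrable_id.const_mul b), intervalIntegral.integral_const,
    intervalIntegral.integral_const_mul, integral_id]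
  simp only [sub_zero, smul_eq_mul, zero_pow two_ne_zero]
  field_simp

def quad (c₀ c₁ c₂ c₃ c₄ c₅ x y : ℝ) : ℝ :=
  c₀ + c₁ * x + c₂ * y + c₃ * x ^ 2 + c₄ * x * y + c₅ * y ^ 2

section
variable (c₀ c₁ c₂ c₃ c₄ c₅ : ℝ) {L H : ℝ}

lemma quad_comm (x y : ℝ) : quad c₀ c₁ c₂ c₃ c₄ c₅ x y = quad c₀ c₂ c₁ c₅ c₄ c₃ y x := by
  unfold quad; ring

lemma hasDerivAt_quad_left (x y : ℝ) :
    HasDerivAt (fun x ↦ quad c₀ c₁ c₂ c₃ c₄ c₅ x y) (c₁ + 2 * c₃ * x + c₄ * y) x := by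
  have hx : HasDerivAt (fun x : ℝ ↦ x) 1 x := hasDerivAt_id x
  have hx2 : HasDerivAt (fun x : ℝ ↦ x ^ 2) (2 * x) x := by simpa using hasDerivAt_pow 2 x
  refine (((((((hasDerivAt_const x c₀).add (hx.const_mul c₁)).add
      (hasDerivAt_const x (c₂ * y))).add (hx2.const_mul c₃)).add
      ((hx.const_mul c₄).mul_const y)).add (hasDerivAt_const x (c₅ * y ^ 2)))).congr_deriv ?_
  ring

lemma edgeAverage_deriv_quad_left (hH : H ≠ 0) (x : ℝ) :
    (1 / H) * ∫ y in (0:ℝ)..H, deriv (fun x ↦ quad c₀ c₁ c₂ c₃ c₄ c₅ x y) x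
      = c₁ + 2 * c₃ * x + c₄ * H / 2 := by
  simp only [fun y ↦ (hasDerivAt_quad_left c₀ c₁ c₂ c₃ c₄ c₅ x y).deriv]
  exact intervalAverage_affine _ _ _ hH

lemma edgeAverage_deriv_quad_right (hL : L ≠ 0) (y : ℝ) :
    (1 / L) * ∫ x in (0:ℝ)..L, deriv (fun y ↦ quad c₀ c₁ c₂ c₃ c₄ c₅ x y) y
      = c₂ + 2 * c₅ * y + c₄ * L / 2 := by
  simp only [quad_comm c₀ c₁ c₂ c₃ c₄ c₅ _ _]
  exact edgeAverage_deriv_quad_left c₀ c₂ c₁ c₅ c₄ c₃ hL y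

end

def HasMorleyDofs (L H α₁ α₂ α₃ α₄ β₁ β₂ β₃ β₄ : ℝ) (p : ℝ → ℝ → ℝ) : Prop :=
  p 0 0 = α₁ ∧ p L 0 = α₂ ∧ p L H = α₃ ∧ p 0 H = α₄ ∧
    (1 / H) * ∫ y in (0:ℝ)..H, deriv (fun x => p x y) 0 = β₁ ∧
    (1 / L) * ∫ x in (0:ℝ)..L, deriv (fun y => p x y) 0 = β₂ ∧
    (1 / H) * ∫ y in (0:ℝ)..H, deriv (fun x => p x y) L = β₃ ∧
    (1 / L) * ∫ x in (0:ℝ)..L, deriv (fun y => p x y) H = β₄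

section
variable {L H α₁ α₂ α₃ α₄ β₁ β₂ β₃ β₄ c₀ c₁ c₂ c₃ c₄ c₅ : ℝ}

lemma hasMorleyDofs_quad_iff (hL : L ≠ 0) (hH : H ≠ 0) :
    HasMorleyDofs L H α₁ α₂ α₃ α₄ β₁ β₂ β₃ β₄ (quad c₀ c₁ c₂ c₃ c₄ c₅) ↔
      c₀ = α₁ ∧ c₀ + c₁ * L + c₃ * L ^ 2 = α₂ ∧
      c₀ + c₁ * L + c₂ * H + c₃ * L ^ 2 + c₄ * L * H + c₅ * H ^ 2 = α₃ ∧
      c₀ + c₂ * H + c₅ * H ^ 2 = α₄ ∧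
      c₁ + c₄ * H / 2 = β₁ ∧ c₂ + c₄ * L / 2 = β₂ ∧
      c₁ + 2 * c₃ * L + c₄ * H / 2 = β₃ ∧ c₂ + 2 * c₅ * H + c₄ * L / 2 = β₄ := by
  simp only [HasMorleyDofs, edgeAverage_deriv_quad_left _ _ _ _ _ _ hH,
    edgeAverage_deriv_quad_right _ _ _ _ _ _ hL]
  simp only [quad]
  ring_nf

/- Solve the equations for `p(a₁)`, `p(a₂)`, `p(a₄)`, `p(a₁) - p(a₂) + p(a₃) - p(a₄)`,
`β₃ - β₁` and `β₄ - β₂` for the coefficients. -/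
noncomputable def morleyInterpolant (L H α₁ α₂ α₃ α₄ β₁ β₂ β₃ β₄ : ℝ) : ℝ → ℝ → ℝ :=
  quad α₁ ((α₂ - α₁) / L - (β₃ - β₁) / 2) ((α₄ - α₁) / H - (β₄ - β₂) / 2)
    ((β₃ - β₁) / (2 * L)) ((α₃ - α₄ - α₂ + α₁) / (L * H)) ((β₄ - β₂) / (2 * H))

lemma compatible_of_hasMorleyDofs_quad (hL : L ≠ 0) (hH : H ≠ 0)
    (h : HasMorleyDofs L H α₁ α₂ α₃ α₄ β₁ β₂ β₃ β₄ (quad c₀ c₁ c₂ c₃ c₄ c₅)) :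
    (α₃ - α₄) / L + (α₂ - α₁) / L = β₁ + β₃ ∧
      (α₃ - α₂) / H + (α₄ - α₁) / H = β₂ + β₄ := by
  obtain ⟨e₁, e₂, e₃, e₄, e₅, e₆, e₇, e₈⟩ := (hasMorleyDofs_quad_iff hL hH).mp h
  constructor
  · field_simp
    linear_combination (e₄ - e₃) + (e₁ - e₂) + L * e₅ + L * e₇
  · field_simp
    linear_combination (e₂ - e₃) + (e₁ - e₄) + H * e₆ + H * e₈

lemma quad_eq_morleyInterpolant (hL : L ≠ 0) (hH : H ≠ 0)
    (h : HasMorleyDofs L H α₁ α₂ α₃ α₄ β₁ β₂ β₃ β₄ (quad c₀ c₁ c₂ c₃ c₄ c₅)) :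
    quad c₀ c₁ c₂ c₃ c₄ c₅ = morleyInterpolant L H α₁ α₂ α₃ α₄ β₁ β₂ β₃ β₄ := by
  obtain ⟨e₁, e₂, e₃, e₄, e₅, e₆, e₇, e₈⟩ := (hasMorleyDofs_quad_iff hL hH).mp h
  have h₁ : c₁ = (α₂ - α₁) / L - (β₃ - β₁) / 2 := by
    field_simp
    linear_combination 2 * (e₂ - e₁) - L * (e₇ - e₅)
  have h₂ : c₂ = (α₄ - α₁) / H - (β₄ - β₂) / 2 := by
    field_simp
    linear_combination 2 * (e₄ - e₁) - H * (e₈ - e₆)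
  have h₃ : c₃ = (β₃ - β₁) / (2 * L) := by
    field_simp
    linear_combination e₇ - e₅
  have h₄ : c₄ = (α₃ - α₄ - α₂ + α₁) / (L * H) := by
    field_simp
    linear_combination e₃ - e₄ - e₂ + e₁
  have h₅ : c₅ = (β₄ - β₂) / (2 * H) := by
    field_simp
    linear_combination e₈ - e₆
  rw [morleyInterpolant, h₁, h₂, h₃, h₄, h₅, e₁]

lemma hasMorleyDofs_morleyInterpolant (hL : L ≠ 0) (hH : H ≠ 0)
    (hx : (α₃ - α₄) / L + (α₂ - α₁) / L = β₁ + β₃)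
    (hy : (α₃ - α₂) / H + (α₄ - α₁) / H = β₂ + β₄) :
    HasMorleyDofs L H α₁ α₂ α₃ α₄ β₁ β₂ β₃ β₄ (morleyInterpolant L H α₁ α₂ α₃ α₄ β₁ β₂ β₃ β₄) := by
  rw [morleyInterpolant, hasMorleyDofs_quad_iff hL hH]
  field_simp at hx hy
  refine ⟨rfl, ?_, ?_, ?_, ?_, ?_, ?_, ?_⟩ <;> field_simp
  · ring
  · ring
  · ring
  · linear_combination hx
  · linear_combination hy
  · linear_combination hx
  · linear_combination hy

end

/-- Lemma B.1: existence and uniqueness of a `P₂` polynomial with prescribed vertex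
values and edge-average normal derivatives on the rectangle `[0,L] × [0,H]`,
iff the two compatibility conditions hold. -/
theorem stmt7 (L H : ℝ) (hL : 0 < L) (hH : 0 < H)
    (α₁ α₂ α₃ α₄ β₁ β₂ β₃ β₄ : ℝ) :
    (∃! p : ℝ → ℝ → ℝ, IsP2 p ∧
      p 0 0 = α₁ ∧ p L 0 = α₂ ∧ p L H = α₃ ∧ p 0 H = α₄ ∧
      (1 / H) * ∫ y in (0:ℝ)..H, deriv (fun x => p x y) 0 = β₁ ∧
      (1 / L) * ∫ x in (0:ℝ)..L, deriv (fun y => p x y) 0 = β₂ ∧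
      (1 / H) * ∫ y in (0:ℝ)..H, deriv (fun x => p x y) L = β₃ ∧
      (1 / L) * ∫ x in (0:ℝ)..L, deriv (fun y => p x y) H = β₄) ↔
    ((α₃ - α₄) / L + (α₂ - α₁) / L = β₁ + β₃ ∧
     (α₃ - α₂) / H + (α₄ - α₁) / H = β₂ + β₄) := by
  change (∃! p, IsP2 p ∧ HasMorleyDofs L H α₁ α₂ α₃ α₄ β₁ β₂ β₃ β₄ p) ↔ _
  constructor
  · rintro ⟨p, ⟨⟨c₀, c₁, c₂, c₃, c₄, c₅, hp⟩, hdofs⟩, -⟩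
    obtain rfl : p = quad c₀ c₁ c₂ c₃ c₄ c₅ := funext₂ hp
    exact compatible_of_hasMorleyDofs_quad hL.ne' hH.ne' hdofs
  · rintro ⟨hx, hy⟩
    refine ⟨morleyInterpolant L H α₁ α₂ α₃ α₄ β₁ β₂ β₃ β₄,
      ⟨⟨_, _, _, _, _, _, fun _ _ ↦ rfl⟩, hasMorleyDofs_morleyInterpolant hL.ne' hH.ne' hx hy⟩, ?_⟩
    rintro q ⟨⟨c₀, c₁, c₂, c₃, c₄, c₅, hq⟩, hdofs⟩
    obtain rfl : q = quad c₀ c₁ c₂ c₃ c₄ c₅ := funext₂ hq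
    exact quad_eq_morleyInterpolant hL.ne' hH.ne' hdofs
end

section
/- Let $K = [0,\xi]\times[0,\eta]$ and let $p \in P_2(K)$ (total degree at most 2) vanish at all eight second-order Gauss--Legendre points on the four boundary edges of $K$. Then $p$ is a scalar multiple of $\varphi_0(x,y) = \tfrac{1}{\xi^2}x(\xi-x) + \tfrac{1}{\eta^2}y(\eta-y) - \tfrac16$. -/
/-!
On each edge of the rectangle a `P₂` polynomial restricts to a univariate quadratic, and the two
Gauss points of the edge are its roots. Since `θ₁ + θ₂ = 1` and `θ₁ θ₂ = 1/6`, Vieta's formulas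
on the bottom and left edges give `p = A - Dξ x + D x² - Fη y + F y² + E x y` with
`A = D ξ²/6 = F η²/6`, and the right edge forces `E = 0`. This is `-D ξ² φ₀`.
-/

open MvPolynomial

noncomputable def exponentXY (i j : ℕ) : Fin 2 →₀ ℕ :=
  Finsupp.single 0 i + Finsupp.single 1 j

@[simp]
lemma exponentXY_apply_zero (i j : ℕ) : exponentXY i j 0 = i := by simp [exponentXY]

@[simp]
lemma exponentXY_apply_one (i j : ℕ) : exponentXY i j 1 = j := by simp [exponentXY]

lemma exponentXY_eq_iff {i j k l : ℕ} : exponentXY i j = exponentXY k l ↔ i = k ∧ j = l := by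
  refine ⟨fun h => ⟨?_, ?_⟩, fun ⟨hi, hj⟩ => hi ▸ hj ▸ rfl⟩
  · simpa using DFunLike.congr_fun h 0
  · simpa using DFunLike.congr_fun h 1

lemma support_subset_of_totalDegree_le_two {R : Type*} [CommSemiring R]
    {p : MvPolynomial (Fin 2) R} (hp : p.totalDegree ≤ 2) :
    p.support ⊆ {exponentXY 0 0, exponentXY 1 0, exponentXY 0 1,
      exponentXY 2 0, exponentXY 1 1, exponentXY 0 2} := by
  intro d hd
  have hdeg : d 0 + d 1 ≤ 2 := by
    have := le_totalDegree hd
    rw [Finsupp.sum_fintype _ _ (fun _ => rfl), Fin.sum_univ_two] at this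
    exact this.trans hp
  have hd_eq : d = exponentXY (d 0) (d 1) := by
    ext a; fin_cases a <;> simp
  rw [hd_eq]
  simp only [Finset.mem_insert, Finset.mem_singleton, exponentXY_eq_iff]
  omega

lemma exists_eval_eq_of_totalDegree_le_two {R : Type*} [CommSemiring R]
    {p : MvPolynomial (Fin 2) R} (hp : p.totalDegree ≤ 2) :
    ∃ a b c d e f : R, ∀ x y : R,
      eval ![x, y] p = a + b * x + c * y + d * x ^ 2 + e * (x * y) + f * y ^ 2 := by
  refine ⟨coeff (exponentXY 0 0) p, coeff (exponentXY 1 0) p, coeff (exponentXY 0 1) p,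
    coeff (exponentXY 2 0) p, coeff (exponentXY 1 1) p, coeff (exponentXY 0 2) p,
    fun x y => ?_⟩
  rw [eval_eq', Finset.sum_subset (support_subset_of_totalDegree_le_two hp)
    (fun d _ hd => by simp [notMem_support_iff.mp hd])]
  simp [exponentXY_eq_iff, Fin.prod_univ_two]
  ring

lemma quadratic_coeffs_of_roots {K : Type*} [Field K] {a b c r s : K} (hrs : r ≠ s)
    (hr : a + b * r + c * r ^ 2 = 0) (hs : a + b * s + c * s ^ 2 = 0) :
    b = -(c * (r + s)) ∧ a = c * r * s := by
  have hb : b = -(c * (r + s)) := by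
    have h : (r - s) * (b + c * (r + s)) = 0 := by linear_combination hr - hs
    linear_combination (mul_eq_zero.mp h).resolve_left (sub_ne_zero.mpr hrs)
  exact ⟨hb, by linear_combination hr - r * hb⟩

lemma gaussNode_sum : (1 - 1 / √3) / 2 + (1 + 1 / √3) / 2 = (1 : ℝ) := by ring

lemma gaussNode_mul : (1 - 1 / √3) / 2 * ((1 + 1 / √3) / 2) = (1 / 6 : ℝ) := by
  have h3 : (1 / √3) ^ 2 = 1 / 3 := by rw [div_pow, Real.sq_sqrt (by norm_num)]; norm_num
  linear_combination -h3 / 4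

lemma gaussNode_ne : (1 - 1 / √3) / 2 ≠ ((1 + 1 / √3) / 2 : ℝ) := by
  have : (0 : ℝ) < 1 / √3 := by positivity
  intro h; linarith

lemma quadratic_coeffs_of_gauss_roots {a b c h : ℝ} (hh : h ≠ 0)
    (h₁ : a + b * ((1 - 1 / √3) / 2 * h) + c * ((1 - 1 / √3) / 2 * h) ^ 2 = 0)
    (h₂ : a + b * ((1 + 1 / √3) / 2 * h) + c * ((1 + 1 / √3) / 2 * h) ^ 2 = 0) :
    b = -(c * h) ∧ a = c * h ^ 2 / 6 := by
  obtain ⟨hb, ha⟩ := quadratic_coeffs_of_roots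
    (mul_left_injective₀ hh |>.ne gaussNode_ne) h₁ h₂
  refine ⟨by linear_combination hb + c * h * gaussNode_sum, ?_⟩
  linear_combination ha + c * h ^ 2 * gaussNode_mul

theorem stmt12_general (ξ η : ℝ) (hξ : 0 < ξ) (hη : 0 < η)
    (θ₁ θ₂ : ℝ) (hθ₁ : θ₁ = (1 - 1 / Real.sqrt 3) / 2) (hθ₂ : θ₂ = (1 + 1 / Real.sqrt 3) / 2)
    (p : MvPolynomial (Fin 2) ℝ) (hp : p.totalDegree ≤ 2)
    (h11 : eval ![θ₁ * ξ, 0] p = 0) (h12 : eval ![θ₂ * ξ, 0] p = 0)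
    (h21 : eval ![ξ, θ₁ * η] p = 0) (h22 : eval ![ξ, θ₂ * η] p = 0)
    (h41 : eval ![(0 : ℝ), θ₂ * η] p = 0) (h42 : eval ![(0 : ℝ), θ₁ * η] p = 0) :
    ∃ c : ℝ, ∀ x y : ℝ,
      eval ![x, y] p = c * (x * (ξ - x) / ξ ^ 2 + y * (η - y) / η ^ 2 - 1 / 6) := by
  subst hθ₁ hθ₂
  obtain ⟨A, B, C, D, E, F, hp⟩ := exists_eval_eq_of_totalDegree_le_two hp
  rw [hp] at h11 h12 h21 h22 h41 h42
  obtain ⟨hB, hA⟩ := quadratic_coeffs_of_gauss_roots (a := A) (b := B) (c := D) hξ.ne'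
    (by linear_combination h11) (by linear_combination h12)
  obtain ⟨hC, hA'⟩ := quadratic_coeffs_of_gauss_roots (a := A) (b := C) (c := F) hη.ne'
    (by linear_combination h42) (by linear_combination h41)
  obtain ⟨hCE, -⟩ := quadratic_coeffs_of_gauss_roots (a := A + B * ξ + D * ξ ^ 2)
    (b := C + E * ξ) (c := F) hη.ne' (by linear_combination h21) (by linear_combination h22)
  have hE : E = 0 := by
    have : E * ξ = 0 := by linear_combination hCE - hC
    exact (mul_eq_zero.mp this).resolve_right hξ.ne'
  have hFD : F * η ^ 2 = D * ξ ^ 2 := by linear_combination 6 * (hA - hA')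
  refine ⟨-(D * ξ ^ 2), fun x y => ?_⟩
  rw [hp, hA, hB, hC, hE]
  field_simp
  linear_combination 6 * (y ^ 2 - η * y) * hFD

/-- A `P₂` polynomial vanishing at the eight edge Gauss points of the rectangle
`[0,ξ] × [0,η]` is a scalar multiple of the bubble `φ₀` (Lemma A.2 (3)). -/
theorem stmt12 (ξ η : ℝ) (hξ : 0 < ξ) (hη : 0 < η)
    (θ₁ θ₂ : ℝ) (hθ₁ : θ₁ = (1 - 1 / Real.sqrt 3) / 2) (hθ₂ : θ₂ = (1 + 1 / Real.sqrt 3) / 2)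
    (p : MvPolynomial (Fin 2) ℝ) (hp : p.totalDegree ≤ 2)
    (h11 : eval ![θ₁ * ξ, 0] p = 0) (h12 : eval ![θ₂ * ξ, 0] p = 0)
    (h21 : eval ![ξ, θ₁ * η] p = 0) (h22 : eval ![ξ, θ₂ * η] p = 0)
    (h31 : eval ![θ₂ * ξ, η] p = 0) (h32 : eval ![θ₁ * ξ, η] p = 0)
    (h41 : eval ![(0 : ℝ), θ₂ * η] p = 0) (h42 : eval ![(0 : ℝ), θ₁ * η] p = 0) :
    ∃ c : ℝ, ∀ x y : ℝ,
      eval ![x, y] p = c * (x * (ξ - x) / ξ ^ 2 + y * (η - y) / η ^ 2 - 1 / 6) :=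
  stmt12_general ξ η hξ hη θ₁ θ₂ hθ₁ hθ₂ p hp h11 h12 h21 h22 h41 h42
end

section
/- Consider the linear system in the unknowns $(x_{i-1}, x_i, z_i^1, z_{i+1}^1, z_i^2, z_{i+1}^2, y_{i-1}^1, y_{i-1}^2, y_i^1, y_i^2, y_{i+1}^1, y_{i+1}^2) \in \mathbb{R}^{12}$ with positive parameters $L_{i-1}, L_i, L_{i+1}, H_1, H_2$: (1) $x_{i-1}/L_{i-1} = z_i^1$; (2) $x_{i-1}/H_1 = y_{i-1}^1 + y_{i-1}^2$; (3) $(x_i - x_{i-1})/L_i = z_i^1 + z_{i+1}^1$; (4) $(x_i + x_{i-1})/H_1 = y_i^1 + y_i^2$; (5) $-x_i/L_{i+1} = z_{i+1}^1$; (6) $x_i/H_1 = y_{i+1}^1 + y_{i+1}^2$; (7) $x_{i-1}/L_{i-1} = z_i^2$; (8) $-x_{i-1}/H_2 = y_{i-1}^2$; (9) $(x_i - x_{i-1})/L_i = z_i^2 + z_{i+1}^2$; (10) $-(x_{i-1}+x_i)/H_2 = y_i^2$; (11) $-x_i/L_{i+1} = z_{i+1}^2$; (12) $-x_i/H_2 =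 y_{i+1}^2$. The solution space of this system is exactly one-dimensional. -/
/-!
A solution is determined by its two edge unknowns `p = x_{i-1}` and `q = x_i`: equations (1), (5),
(7), (11) give the `z`'s and (8), (10), (12) followed by (2), (4), (6) give the `y`'s. Substituting
(1) and (5) into (3) leaves the single compatibility condition
`q (1/L_i + 1/L_{i+1}) = p (1/L_{i-1} + 1/L_i)`, which (9) then repeats; since
`1/L_i + 1/L_{i+1} ≠ 0` it fixes `q` in terms of `p`, leaving a line of solutions.
-/

/-- The solution set of the 12×12 linear system of Lemma B.2 (bottom-interior-edge
pattern of the RRM element).  Unknown ordering: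
`u 0 = x_{i-1}`, `u 1 = x_i`, `u 2 = z_i^1`, `u 3 = z_{i+1}^1`, `u 4 = z_i^2`,
`u 5 = z_{i+1}^2`, `u 6 = y_{i-1}^1`, `u 7 = y_{i-1}^2`, `u 8 = y_i^1`,
`u 9 = y_i^2`, `u 10 = y_{i+1}^1`, `u 11 = y_{i+1}^2`. -/
def solSet (L₁ L₂ L₃ H₁ H₂ : ℝ) : Set (Fin 12 → ℝ) :=
  {u | u 0 / L₁ = u 2 ∧
       u 0 / H₁ = u 6 + u 7 ∧
       (u 1 - u 0) / L₂ = u 2 + u 3 ∧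
       (u 1 + u 0) / H₁ = u 8 + u 9 ∧
       -(u 1) / L₃ = u 3 ∧
       u 1 / H₁ = u 10 + u 11 ∧
       u 0 / L₁ = u 4 ∧
       -(u 0) / H₂ = u 7 ∧
       (u 1 - u 0) / L₂ = u 4 + u 5 ∧
       -(u 0 + u 1) / H₂ = u 9 ∧
       -(u 1) / L₃ = u 5 ∧
       -(u 1) / H₂ = u 11}

namespace solSet

variable {L₁ L₂ L₃ H₁ H₂ : ℝ}

noncomputable def extend (L₁ L₃ H₁ H₂ p q : ℝ) : Fin 12 → ℝ :=
  ![p, q, p / L₁, -q / L₃, p / L₁, -q / L₃, p / H₁ + p / H₂, -p / H₂,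
    (p + q) / H₁ + (p + q) / H₂, -(p + q) / H₂, q / H₁ + q / H₂, -q / H₂]

lemma extend_smul (c p q : ℝ) :
    extend L₁ L₃ H₁ H₂ (c * p) (c * q) = c • extend L₁ L₃ H₁ H₂ p q := by
  ext i
  fin_cases i <;> simp [extend] <;> ring

lemma extend_mem {p q : ℝ} (h : q * (1 / L₂ + 1 / L₃) = p * (1 / L₁ + 1 / L₂)) :
    extend L₁ L₃ H₁ H₂ p q ∈ solSet L₁ L₂ L₃ H₁ H₂ := by
  refine ⟨?_, ?_, ?_, ?_, ?_, ?_, ?_, ?_, ?_, ?_, ?_, ?_⟩ <;>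
    simp only [extend, Matrix.cons_val] <;> ring_nf at * <;> linarith

lemma compat_of_mem {u : Fin 12 → ℝ} (hu : u ∈ solSet L₁ L₂ L₃ H₁ H₂) :
    u 1 * (1 / L₂ + 1 / L₃) = u 0 * (1 / L₁ + 1 / L₂) := by
  obtain ⟨e1, -, e3, -, e5, -⟩ := hu
  ring_nf at *
  linarith

lemma eq_extend_of_mem {u : Fin 12 → ℝ} (hu : u ∈ solSet L₁ L₂ L₃ H₁ H₂) :
    u = extend L₁ L₃ H₁ H₂ (u 0) (u 1) := by
  obtain ⟨e1, e2, -, e4, e5, e6, e7, e8, -, e10, e11, e12⟩ := hu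
  ext i
  fin_cases i <;> simp [extend] <;> ring_nf at * <;> linarith

end solSet

theorem stmt16_general (L₁ L₂ L₃ H₁ H₂ : ℝ)
    (hL₂ : 0 < L₂) (hL₃ : 0 < L₃) :
    ∃ v ∈ solSet L₁ L₂ L₃ H₁ H₂, v ≠ 0 ∧
      ∀ w ∈ solSet L₁ L₂ L₃ H₁ H₂, ∃ c : ℝ, w = c • v := by
  set a := 1 / L₂ + 1 / L₃
  set b := 1 / L₁ + 1 / L₂
  have ha : a ≠ 0 := by positivity
  refine ⟨solSet.extend L₁ L₃ H₁ H₂ a b, solSet.extend_mem (mul_comm b a), fun h => ha ?_,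
    fun w hw => ⟨w 0 / a, ?_⟩⟩
  · simpa [solSet.extend] using congrFun h 0
  have hw₁ : w 1 = w 0 / a * b := by
    rw [div_mul_eq_mul_div, eq_div_iff ha]
    exact solSet.compat_of_mem hw
  calc w = solSet.extend L₁ L₃ H₁ H₂ (w 0 / a * a) (w 0 / a * b) := by
        rw [div_mul_cancel₀ _ ha, ← hw₁]
        exact solSet.eq_extend_of_mem hw
    _ = _ := solSet.extend_smul ..

/-- The solution space of the system is exactly one-dimensional. -/
theorem stmt16 (L₁ L₂ L₃ H₁ H₂ : ℝ)
    (hL₁ : 0 < L₁) (hL₂ : 0 < L₂) (hL₃ : 0 < L₃) (hH₁ : 0 < H₁) (hH₂ : 0 < H₂) :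
    ∃ v ∈ solSet L₁ L₂ L₃ H₁ H₂, v ≠ 0 ∧
      ∀ w ∈ solSet L₁ L₂ L₃ H₁ H₂, ∃ c : ℝ, w = c • v :=
  stmt16_general L₁ L₂ L₃ H₁ H₂ hL₂ hL₃
end

section
/- Let $a_h$ and $b$ be symmetric bilinear forms on a real vector space $V$, $(\lambda, u)$ and $(\lambda_h, u_h)$ pairs with $b(u,u) = b(u_h,u_h) = 1$, $a_h(u,u) = \lambda$, $a_h(u_h,u_h) = \lambda_h$, and suppose $a_h(u_h, w) = \lambda_h b(u_h, w)$ for all $w$ in a subspace $W$ containing $u_h$ and an element $\Pi u$. Then the expansion $\lambda - \lambda_h = a_h(u - u_h, u - u_h) - \lambda_h b(u - u_h, u - u_h) - 2\lambda_h b(u - \Pi u, u_h) + 2 a_h(u - \Pi u, \Pi u) + 2 a_h(u - \Pi u, u_h - \Pi u)$ holds. -/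
/-!
Expanding the two quadratic forms of the error `u - u_h` shows that `λ - λ_h` equals the
error's `a_h - λ_h b` energy plus twice the discrete eigen-residual `a_h(u_h, ·) - λ_h b(u_h, ·)`
evaluated at `u`. The residual vanishes on `W`, so at `u` it equals its value at `u - Πu`, which
is then split using the discrete eigen-equation tested with `Πu`.
-/

theorem sub_eq_energy_error_add_residual {R V : Type*} [CommRing R] [AddCommGroup V]
    [Module R V] (a b : V →ₗ[R] V →ₗ[R] R)
    (ha_symm : ∀ x y, a x y = a y x) (hb_symm : ∀ x y, b x y = b y x)
    {u : V} {lam : R} (hbu : b u u = 1) (hlam : a u u = lam) (v : V) (μ : R) :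
    lam - μ =
      a (u - v) (u - v) - μ * b (u - v) (u - v)
        + 2 * (a v u - μ * b v u) - (a v v - μ * b v v) := by
  simp only [map_sub, LinearMap.sub_apply]
  linear_combination -hlam - ha_symm v u + μ * hbu + μ * hb_symm v u

theorem stmt19_general {V : Type*} [AddCommGroup V] [Module ℝ V]
    (a_h b : V →ₗ[ℝ] V →ₗ[ℝ] ℝ)
    (ha_symm : ∀ x y, a_h x y = a_h y x) (hb_symm : ∀ x y, b x y = b y x)
    (W : Submodule ℝ V) (u u_h Pu : V) (lam lam_h : ℝ)
    (hu_hW : u_h ∈ W) (hPuW : Pu ∈ W)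
    (hbu : b u u = 1)
    (hlam : a_h u u = lam)
    (heig : ∀ w ∈ W, a_h u_h w = lam_h * b u_h w) :
    lam - lam_h =
      a_h (u - u_h) (u - u_h) - lam_h * b (u - u_h) (u - u_h)
        - 2 * lam_h * b (u - Pu) u_h
        + 2 * a_h (u - Pu) Pu
        + 2 * a_h (u - Pu) (u_h - Pu) := by
  rw [sub_eq_energy_error_add_residual a_h b ha_symm hb_symm hbu hlam u_h lam_h,
    heig u_h hu_hW, sub_self, sub_zero]
  simp only [map_sub, LinearMap.sub_apply]
  linear_combination 2 * heig Pu hPuW - 2 * ha_symm u_h Pu + 2 * ha_symm u_h u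
    - 2 * lam_h * hb_symm u_h u + 2 * lam_h * hb_symm u_h Pu

/-- Abstract eigenvalue error expansion identity (equation (3.10), generalizing the
Armentano--Durán identity). -/
theorem stmt19 {V : Type*} [AddCommGroup V] [Module ℝ V]
    (a_h b : V →ₗ[ℝ] V →ₗ[ℝ] ℝ)
    (ha_symm : ∀ x y, a_h x y = a_h y x) (hb_symm : ∀ x y, b x y = b y x)
    (W : Submodule ℝ V) (u u_h Pu : V) (lam lam_h : ℝ)
    (hu_hW : u_h ∈ W) (hPuW : Pu ∈ W)
    (hbu : b u u = 1) (hbuh : b u_h u_h = 1)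
    (hlam : a_h u u = lam) (hlamh : a_h u_h u_h = lam_h)
    (heig : ∀ w ∈ W, a_h u_h w = lam_h * b u_h w) :
    lam - lam_h =
      a_h (u - u_h) (u - u_h) - lam_h * b (u - u_h) (u - u_h)
        - 2 * lam_h * b (u - Pu) u_h
        + 2 * a_h (u - Pu) Pu
        + 2 * a_h (u - Pu) (u_h - Pu) :=
  stmt19_general a_h b ha_symm hb_symm W u u_h Pu lam lam_h hu_hW hPuW hbu hlam heig
end
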